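/- arXiv:math/0509529 — 3 statements merged into one kernel-verified Lean document; each statement's English description precedes it below -/
import Mathlib

section
/- The set of triples (a,b,c) of positive integers satisfying a² + 2b² + 3c² = 6abc is exactly the smallest set S of triples of positive integers such that (1,1,1) ∈ S and S is closed under the three mutations (a,b,c) ↦ (6bc − a, b, c), (a,b,c) ↦ (a, 3ac − b, c), and (a,b,c) ↦ (a, b, 2ab − c). -/
private lemma mut_pos1 {a b c : ℤ} (ha : 0 < a) (hb : 0 < b) (hc : 0 < c)
    (heq : a ^ 2 + 2 * b ^ 2 + 3 * c ^ 2 = 6 * a * b * c) : 0 < 6 * b * c - a := by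
  by_contra h
  push_neg at h
  nlinarith [mul_nonneg ha.le (neg_nonneg.2 h)]

private lemma mut_pos2 {a b c : ℤ} (ha : 0 < a) (hb : 0 < b) (hc : 0 < c)
    (heq : a ^ 2 + 2 * b ^ 2 + 3 * c ^ 2 = 6 * a * b * c) : 0 < 3 * a * c - b := by
  by_contra h
  push_neg at h
  nlinarith [mul_nonneg hb.le (neg_nonneg.2 h)]

private lemma mut_pos3 {a b c : ℤ} (ha : 0 < a) (hb : 0 < b) (hc : 0 < c)
    (heq : a ^ 2 + 2 * b ^ 2 + 3 * c ^ 2 = 6 * a * b * c) : 0 < 2 * a * b - c := by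
  by_contra h
  push_neg at h
  nlinarith [mul_nonneg hc.le (neg_nonneg.2 h)]

set_option maxHeartbeats 1000000 in
private lemma base_case {a b c : ℤ} (ha : 1 ≤ a) (hb : 1 ≤ b) (hc : 1 ≤ c)
    (h1 : a ≤ 3 * b * c) (h2 : 2 * b ≤ 3 * a * c) (h3 : c ≤ a * b)
    (heq : a ^ 2 + 2 * b ^ 2 + 3 * c ^ 2 = 6 * a * b * c) : a = 1 ∧ b = 1 ∧ c = 1 := by
  have hc1 : c = 1 := by
    have : c ≤ 1 := by
      nlinarith [mul_nonneg (sub_nonneg.2 h1) (sub_nonneg.2 ha),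
        mul_nonneg (sub_nonneg.2 h2) (sub_nonneg.2 hb),
        mul_nonneg (sub_nonneg.2 h3) (sub_nonneg.2 hc),
        mul_nonneg (sub_nonneg.2 h1) (sub_nonneg.2 hc),
        mul_nonneg (sub_nonneg.2 h2) (sub_nonneg.2 hc),
        mul_nonneg (sub_nonneg.2 h3) (sub_nonneg.2 ha),
        mul_nonneg (sub_nonneg.2 h3) (sub_nonneg.2 hb),
        sq_nonneg (a - 1), sq_nonneg (b - 1), sq_nonneg (c - 1)]
    omega
  subst hc1
  have hb1 : b = 1 := by
    have h1' : a ≤ 3 * b := by linarith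
    have h2' : 2 * b ≤ 3 * a := by linarith
    have : b ≤ 1 := by
      nlinarith [sq_nonneg (3 * b - a), mul_nonneg (sub_nonneg.2 h1') (sub_nonneg.2 h2'),
        sq_nonneg (a - 1), sq_nonneg (b - 1)]
    omega
  subst hb1
  have ha1 : a = 1 := by
    have : a ≤ 1 := by nlinarith
    omega
  exact ⟨ha1, rfl, rfl⟩

private lemma descent (S : Set (ℤ × ℤ × ℤ))
    (hone : (1, 1, 1) ∈ S)
    (hm1 : ∀ a b c : ℤ, (a, b, c) ∈ S → (6 * b * c - a, b, c) ∈ S)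
    (hm2 : ∀ a b c : ℤ, (a, b, c) ∈ S → (a, 3 * a * c - b, c) ∈ S)
    (hm3 : ∀ a b c : ℤ, (a, b, c) ∈ S → (a, b, 2 * a * b - c) ∈ S) :
    ∀ n : ℕ, ∀ a b c : ℤ, 0 < a → 0 < b → 0 < c →
      a ^ 2 + 2 * b ^ 2 + 3 * c ^ 2 = 6 * a * b * c → a + b + c ≤ n → (a, b, c) ∈ S := by
  intro n
  induction n with
  | zero => intro a b c ha hb hc _ hle; omega
  | succ n ih =>
    intro a b c ha hb hc heq hle
    by_cases h1 : 3 * b * c < a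
    · have ha' : 0 < 6 * b * c - a := mut_pos1 ha hb hc heq
      have heq' : (6 * b * c - a) ^ 2 + 2 * b ^ 2 + 3 * c ^ 2 = 6 * (6 * b * c - a) * b * c := by
        ring_nf; ring_nf at heq; linarith
      have hmem := ih (6 * b * c - a) b c ha' hb hc heq' (by push_cast at hle ⊢; linarith)
      have h := hm1 (6 * b * c - a) b c hmem
      have e : 6 * b * c - (6 * b * c - a) = a := by ring
      rwa [e] at h
    · by_cases h2 : 3 * a * c < 2 * b
      · have hb' : 0 < 3 * a * c - b := mut_pos2 ha hb hc heq
        have heq' : a ^ 2 + 2 * (3 * a * c - b) ^ 2 + 3 * c ^ 2 = 6 * a * (3 * a * c - b) * c := by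
          ring_nf; ring_nf at heq; linarith
        have hmem := ih a (3 * a * c - b) c ha hb' hc heq' (by push_cast at hle ⊢; linarith)
        have h := hm2 a (3 * a * c - b) c hmem
        have e : 3 * a * c - (3 * a * c - b) = b := by ring
        rwa [e] at h
      · by_cases h3 : a * b < c
        · have hc' : 0 < 2 * a * b - c := mut_pos3 ha hb hc heq
          have heq' : a ^ 2 + 2 * b ^ 2 + 3 * (2 * a * b - c) ^ 2 = 6 * a * b * (2 * a * b - c) := by
            ring_nf; ring_nf at heq; linarith
          have hmem := ih a b (2 * a * b - c) ha hb hc' heq' (by push_cast at hle ⊢; linarith)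
          have h := hm3 a b (2 * a * b - c) hmem
          have e : 2 * a * b - (2 * a * b - c) = c := by ring
          rwa [e] at h
        · push_neg at h1 h2 h3
          obtain ⟨e1, e2, e3⟩ := base_case ha hb hc h1 h2 h3 heq
          rw [e1, e2, e3]
          exact hone

/-- The set of positive integer solutions of `a² + 2b² + 3c² = 6abc` is exactly
the smallest set of triples of positive integers containing `(1,1,1)` and
closed under the three mutations. -/
theorem stmt_3 :
    {p : ℤ × ℤ × ℤ | 0 < p.1 ∧ 0 < p.2.1 ∧ 0 < p.2.2 ∧
        p.1 ^ 2 + 2 * p.2.1 ^ 2 + 3 * p.2.2 ^ 2 = 6 * p.1 * p.2.1 * p.2.2} =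
      ⋂₀ {S : Set (ℤ × ℤ × ℤ) |
        (∀ p ∈ S, 0 < p.1 ∧ 0 < p.2.1 ∧ 0 < p.2.2) ∧
        (1, 1, 1) ∈ S ∧
        (∀ a b c : ℤ, (a, b, c) ∈ S → (6 * b * c - a, b, c) ∈ S) ∧
        (∀ a b c : ℤ, (a, b, c) ∈ S → (a, 3 * a * c - b, c) ∈ S) ∧
        (∀ a b c : ℤ, (a, b, c) ∈ S → (a, b, 2 * a * b - c) ∈ S)} := by
  apply Set.eq_of_subset_of_subset
  · rintro ⟨a, b, c⟩ ⟨ha, hb, hc, heq⟩ S ⟨_, hone, hm1, hm2, hm3⟩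
    exact descent S hone hm1 hm2 hm3 (a + b + c).toNat a b c ha hb hc heq (by omega)
  · intro p hp
    apply hp
    refine ⟨fun q hq => ⟨hq.1, hq.2.1, hq.2.2.1⟩, ⟨by norm_num, by norm_num, by norm_num, by norm_num⟩, ?_, ?_, ?_⟩
    · rintro a b c ⟨ha, hb, hc, heq⟩
      exact ⟨mut_pos1 ha hb hc heq, hb, hc, by ring_nf; ring_nf at heq; linarith⟩
    · rintro a b c ⟨ha, hb, hc, heq⟩
      exact ⟨ha, mut_pos2 ha hb hc heq, hc, by ring_nf; ring_nf at heq; linarith⟩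
    · rintro a b c ⟨ha, hb, hc, heq⟩
      exact ⟨ha, hb, mut_pos3 ha hb hc heq, by ring_nf; ring_nf at heq; linarith⟩
end

section
/- Fix d ≥ 1. The set of T_d-strings is exactly the smallest set of strings containing the base string ([4] if d = 1, and [3,2,…,2,3] with d − 2 twos if d ≥ 2) and closed under the two operations [b₁,…,b_r] ↦ [b₁+1, b₂,…,b_r, 2] and [b₁,…,b_r] ↦ [2, b₁,…,b_r + 1] (where in the last operation the final entry is increased by 1 and a 2 is prepended). -/
/-- The value of the Hirzebruch–Jung continued fraction
`[b₁,…,b_r] = b₁ − 1/(b₂ − 1/(⋯ − 1/b_r))`.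
(For the empty list we set the value to `0`; since `1/0 = 0` in `ℚ`, the
recursion then gives the correct value `b_r` for singleton lists.) -/
def hjValue : List ℤ → ℚ
  | [] => 0
  | b :: l => (b : ℚ) - 1 / hjValue l

/-- A string is a nonempty list of integers, each at least `2`. -/
def IsString (l : List ℤ) : Prop := l ≠ [] ∧ ∀ b ∈ l, 2 ≤ b

/-- Two strings are conjugate if their Hirzebruch–Jung continued fraction
values are `n/a` and `n/(n−a)` for some integers `0 < a < n` with
`gcd(a,n) = 1`. -/
def Conjugate (l l' : List ℤ) : Prop :=
  ∃ n a : ℤ, 0 < a ∧ a < n ∧ IsCoprime a n ∧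
    hjValue l = (n : ℚ) / (a : ℚ) ∧ hjValue l' = (n : ℚ) / ((n : ℚ) - (a : ℚ))

/-- A `T_d`-string: a string whose value is `dn²/(dna − 1)` for some `n ≥ 2`
and `1 ≤ a < n` with `gcd(a,n) = 1` (the string of the minimal resolution of
a `T_d`-singularity `(1/dn²)(1, dna − 1)`). -/
def IsTString (d : ℕ) (l : List ℤ) : Prop :=
  IsString l ∧ ∃ n a : ℤ, 2 ≤ n ∧ 1 ≤ a ∧ a < n ∧ IsCoprime a n ∧
    hjValue l = (((d : ℤ) * n ^ 2 : ℤ) : ℚ) / (((d : ℤ) * n * a - 1 : ℤ) : ℚ)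

/-- The base `T_d`-string: `[4]` for `d = 1`, and `[3,2,…,2,3]` with `d − 2`
twos for `d ≥ 2`. -/
def baseTString (d : ℕ) : List ℤ :=
  if d = 1 then [4] else 3 :: (List.replicate (d - 2) 2 ++ [3])

/-! The continuant matrix `M = ∏ᵢ !![bᵢ, -1; 1, 0]` of a string has determinant `1`, its
first column `(p, q)` gives the value `p / q` with `0 ≤ q < p`, and, applying this to the
reversed string, its entry `x = M 0 1` satisfies `0 ≤ -x < p`. A determinant-one integer matrix
is determined by its first column and such an `x`, so a string of value `dn²/(dna - 1)` has
matrix `tMatrix d n a`.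
The two operations multiply the matrix by fixed matrices on both sides, turning `tMatrix d n a`
into `tMatrix d (n + a) a` and `tMatrix d (2n - a) n`. Conversely every coprime pair `1 ≤ a < n`
descends along the inverse steps to `(2, 1)`, the parameters of the base string. Since a string is
determined by its value, both inclusions follow. -/

open Matrix

def hjMatrix (l : List ℤ) : Matrix (Fin 2) (Fin 2) ℤ :=
  (l.map fun b => !![b, -1; 1, 0]).prod

@[simp]
lemma hjMatrix_nil : hjMatrix [] = 1 := rfl

lemma hjMatrix_cons (b : ℤ) (l : List ℤ) : hjMatrix (b :: l) = !![b, -1; 1, 0] * hjMatrix l :=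
  rfl

lemma hjMatrix_append (l l' : List ℤ) : hjMatrix (l ++ l') = hjMatrix l * hjMatrix l' := by
  simp [hjMatrix]

lemma det_hjMatrix (l : List ℤ) : (hjMatrix l).det = 1 := by
  induction l with
  | nil => simp
  | cons b l ih => rw [hjMatrix_cons, det_mul, ih, det_fin_two_of]; ring

lemma hjMatrix_reverse (l : List ℤ) :
    hjMatrix l.reverse =
      !![hjMatrix l 0 0, -hjMatrix l 1 0; -hjMatrix l 0 1, hjMatrix l 1 1] := by
  induction l with
  | nil => simp [one_fin_two]
  | cons b l ih =>
    rw [List.reverse_cons, hjMatrix_append, ih, hjMatrix_cons, hjMatrix_cons, hjMatrix_nil,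
      Matrix.mul_one, mul_fin_two]
    simp only [mul_apply, Fin.sum_univ_two, of_apply, cons_val', cons_val_zero, cons_val_one,
      empty_val', cons_val_fin_one]
    congrm !![?_, ?_; ?_, ?_] <;> ring

lemma hjMatrix_one_zero_mem_Ico {l : List ℤ} (hl : ∀ b ∈ l, 2 ≤ b) :
    hjMatrix l 1 0 ∈ Set.Ico 0 (hjMatrix l 0 0) := by
  induction l with
  | nil => simp
  | cons b l ih =>
    obtain ⟨hq, hqp⟩ := ih fun c hc => hl c (List.mem_cons_of_mem b hc)
    have hb : 2 ≤ b := hl b List.mem_cons_self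
    simp only [hjMatrix_cons, mul_apply, Fin.sum_univ_two, of_apply, cons_val', cons_val_zero,
      cons_val_one, empty_val', cons_val_fin_one, Set.mem_Ico]
    constructor <;> nlinarith

lemma hjMatrix_zero_zero_pos {l : List ℤ} (hl : ∀ b ∈ l, 2 ≤ b) : 0 < hjMatrix l 0 0 :=
  (hjMatrix_one_zero_mem_Ico hl).1.trans_lt (hjMatrix_one_zero_mem_Ico hl).2

lemma one_le_hjMatrix_one_zero {l : List ℤ} (hne : l ≠ []) (hl : ∀ b ∈ l, 2 ≤ b) :
    1 ≤ hjMatrix l 1 0 := by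
  obtain ⟨b, t, rfl⟩ := List.exists_cons_of_ne_nil hne
  have hpos := hjMatrix_zero_zero_pos fun c hc => hl c (List.mem_cons_of_mem b hc)
  simpa [hjMatrix_cons, mul_apply, Fin.sum_univ_two] using Int.add_one_le_of_lt hpos

lemma neg_hjMatrix_zero_one_mem_Ico {l : List ℤ} (hl : ∀ b ∈ l, 2 ≤ b) :
    -hjMatrix l 0 1 ∈ Set.Ico 0 (hjMatrix l 0 0) := by
  simpa [hjMatrix_reverse] using hjMatrix_one_zero_mem_Ico (l := l.reverse) (by simpa using hl)

lemma hjValue_eq_div {l : List ℤ} (hl : ∀ b ∈ l, 2 ≤ b) :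
    hjValue l = hjMatrix l 0 0 / hjMatrix l 1 0 := by
  induction l with
  | nil => simp [hjValue]
  | cons b l ih =>
    have hl' : ∀ c ∈ l, 2 ≤ c := fun c hc => hl c (List.mem_cons_of_mem b hc)
    have hp : (hjMatrix l 0 0 : ℚ) ≠ 0 := by exact_mod_cast (hjMatrix_zero_zero_pos hl').ne'
    rw [hjValue, ih hl', one_div_div]
    simp only [hjMatrix_cons, mul_apply, Fin.sum_univ_two, of_apply, cons_val', cons_val_zero,
      cons_val_one, empty_val', cons_val_fin_one, one_mul, zero_mul, add_zero, neg_mul]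
    push_cast
    field_simp
    ring

lemma ceil_hjValue_cons {b : ℤ} {l : List ℤ} (hl : ∀ c ∈ b :: l, 2 ≤ c) :
    ⌈hjValue (b :: l)⌉ = b := by
  have hl' : ∀ c ∈ l, 2 ≤ c := fun c hc => hl c (List.mem_cons_of_mem b hc)
  obtain ⟨hq, hqp⟩ := hjMatrix_one_zero_mem_Ico hl'
  have hp : (0 : ℚ) < hjMatrix l 0 0 := by exact_mod_cast hq.trans_lt hqp
  have h0 : (0 : ℚ) ≤ hjMatrix l 1 0 / hjMatrix l 0 0 := by positivity
  have h1 : (hjMatrix l 1 0 / hjMatrix l 0 0 : ℚ) < 1 := by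
    rw [div_lt_one hp]; exact_mod_cast hqp
  rw [Int.ceil_eq_iff, hjValue, hjValue_eq_div hl', one_div_div]
  constructor <;> linarith

theorem hjValue_injOn : Set.InjOn hjValue {l | ∀ b ∈ l, 2 ≤ b} := by
  intro l hl l' hl' h
  induction l generalizing l' with
  | nil =>
    cases l' with
    | nil => rfl
    | cons b' t' =>
      have hb' := ceil_hjValue_cons hl'
      rw [← h, hjValue, Int.ceil_zero] at hb'
      linarith [hl' b' List.mem_cons_self]
  | cons b t ih =>
    cases l' with
    | nil =>
      have hb := ceil_hjValue_cons hl
      rw [h, hjValue, Int.ceil_zero] at hb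
      linarith [hl b List.mem_cons_self]
    | cons b' t' =>
      obtain rfl : b = b' := by rw [← ceil_hjValue_cons hl, h, ceil_hjValue_cons hl']
      have ht : hjValue t = hjValue t' := by simpa [hjValue] using h
      rw [ih (fun c hc => hl c (List.mem_cons_of_mem b hc))
        (fun c hc => hl' c (List.mem_cons_of_mem b hc)) ht]

theorem Matrix.eq_of_det_eq_one_of_col_zero_eq {M N : Matrix (Fin 2) (Fin 2) ℤ}
    (hM : M.det = 1) (hN : N.det = 1) (h00 : M 0 0 = N 0 0) (h10 : M 1 0 = N 1 0)
    (hM01 : -M 0 1 ∈ Set.Ico 0 (M 0 0)) (hN01 : -N 0 1 ∈ Set.Ico 0 (N 0 0)) : M = N := by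
  rw [det_fin_two] at hM hN
  have hcop : IsCoprime (M 0 0) (M 1 0) := ⟨M 1 1, -M 0 1, by linear_combination hM⟩
  have hdvd : M 0 0 ∣ (M 0 1 - N 0 1) * M 1 0 :=
    ⟨M 1 1 - N 1 1, by linear_combination hN - hM + N 1 1 * h00 - N 0 1 * h10⟩
  have h01 : M 0 1 = N 0 1 := sub_eq_zero.mp <| Int.eq_zero_of_abs_lt_dvd
    (hcop.dvd_of_dvd_mul_right hdvd) (abs_lt.mpr ⟨by linarith [hM01.2, hN01.1],
      by linarith [hM01.1, hN01.2]⟩)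
  have h11 : M 1 1 = N 1 1 := by
    refine mul_left_cancel₀ (a := M 0 0) (by linarith [hM01.1, hM01.2]) ?_
    linear_combination hM - hN - N 1 1 * h00 + M 1 0 * h01 + N 0 1 * h10
  ext i j
  fin_cases i <;> fin_cases j <;> assumption

/-- The continuant matrix of a string of value `Dn²/(Dna - 1)`; its entry `0 1` is minus the
inverse of `Dna - 1` modulo `Dn²`, reduced into `[0, Dn²)`. -/
def tMatrix (D n a : ℤ) : Matrix (Fin 2) (Fin 2) ℤ :=
  !![D * n ^ 2, -(D * n * (n - a) - 1); D * n * a - 1, -(D * a * (n - a) - 1)]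

lemma det_tMatrix (D n a : ℤ) : (tMatrix D n a).det = 1 := by
  rw [tMatrix, det_fin_two_of]; ring

lemma hjMatrix_eq_tMatrix {D n a : ℤ} (hD : 1 ≤ D) (ha : 1 ≤ a) (han : a < n)
    {l : List ℤ} (hl : IsString l)
    (hval : hjValue l = ((D * n ^ 2 : ℤ) : ℚ) / ((D * n * a - 1 : ℤ) : ℚ)) :
    hjMatrix l = tMatrix D n a := by
  have hDa : 1 ≤ D * a := by nlinarith
  have hA : 0 < D * n * a - 1 := by nlinarith
  have hcop : IsCoprime (hjMatrix l 0 0) (hjMatrix l 1 0) :=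
    ⟨hjMatrix l 1 1, -hjMatrix l 0 1,
      by linear_combination (det_fin_two _).symm.trans (det_hjMatrix l)⟩
  have hcopT : IsCoprime (tMatrix D n a 0 0) (tMatrix D n a 1 0) :=
    ⟨tMatrix D n a 1 1, -tMatrix D n a 0 1,
      by linear_combination (det_fin_two _).symm.trans (det_tMatrix D n a)⟩
  rw [hjValue_eq_div hl.2] at hval
  obtain ⟨h00, h10⟩ := Rat.div_int_inj (one_le_hjMatrix_one_zero hl.1 hl.2) hA
    (Int.isCoprime_iff_gcd_eq_one.mp hcop) (Int.isCoprime_iff_gcd_eq_one.mp hcopT) hval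
  refine eq_of_det_eq_one_of_col_zero_eq (det_hjMatrix l) (det_tMatrix D n a) h00 h10
    (neg_hjMatrix_zero_one_mem_Ico hl.2) ?_
  simp only [tMatrix, of_apply, cons_val', cons_val_zero, cons_val_one, empty_val',
    cons_val_fin_one, neg_neg, Set.mem_Ico]
  constructor <;> nlinarith

lemma hjMatrix_cons_add_one_append_two (b : ℤ) (bs : List ℤ) :
    hjMatrix ((b + 1) :: (bs ++ [2])) =
      !![1, 1; 0, 1] * hjMatrix (b :: bs) * !![2, -1; 1, 0] := by
  have hhead : !![b + 1, -1; 1, 0] = !![1, 1; 0, 1] * !![b, -1; 1, 0] := by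
    rw [mul_fin_two]; congrm !![?_, ?_; ?_, ?_] <;> ring
  rw [hjMatrix_cons, hjMatrix_append, hjMatrix_cons, hjMatrix_cons, hjMatrix_nil, Matrix.mul_one,
    hhead]
  simp only [Matrix.mul_assoc]

lemma hjMatrix_two_cons_append_add_one (bs : List ℤ) (c : ℤ) :
    hjMatrix (2 :: (bs ++ [c + 1])) =
      !![2, -1; 1, 0] * hjMatrix (bs ++ [c]) * !![1, 0; -1, 1] := by
  have hlast : !![c + 1, -1; 1, 0] = !![c, -1; 1, 0] * !![1, 0; -1, 1] := by
    rw [mul_fin_two]; congrm !![?_, ?_; ?_, ?_] <;> ring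
  rw [hjMatrix_cons, hjMatrix_append, hjMatrix_append, hjMatrix_cons, hjMatrix_cons, hjMatrix_nil,
    Matrix.mul_one, Matrix.mul_one, hlast]
  simp only [Matrix.mul_assoc]

lemma tMatrix_add (D n a : ℤ) :
    tMatrix D (n + a) a = !![1, 1; 0, 1] * tMatrix D n a * !![2, -1; 1, 0] := by
  rw [tMatrix, tMatrix, mul_fin_two, mul_fin_two]
  congrm !![?_, ?_; ?_, ?_] <;> ring

lemma tMatrix_two_mul_sub (D n a : ℤ) :
    tMatrix D (2 * n - a) n = !![2, -1; 1, 0] * tMatrix D n a * !![1, 0; -1, 1] := by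
  rw [tMatrix, tMatrix, mul_fin_two, mul_fin_two]
  congrm !![?_, ?_; ?_, ?_] <;> ring

lemma hjMatrix_replicate_two (k : ℕ) :
    hjMatrix (List.replicate k 2) = !![(k : ℤ) + 1, -k; k, 1 - k] := by
  induction k with
  | zero => simp [one_fin_two]
  | succ k ih =>
    rw [List.replicate_succ, hjMatrix_cons, ih, mul_fin_two]
    push_cast
    congrm !![?_, ?_; ?_, ?_] <;> ring

lemma hjMatrix_baseTString {d : ℕ} (hd : 1 ≤ d) : hjMatrix (baseTString d) = tMatrix d 2 1 := by
  obtain rfl | ⟨k, rfl⟩ : d = 1 ∨ ∃ k, d = k + 2 := by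
    rcases d with _ | _ | k <;> simp_all
  · rw [baseTString, if_pos rfl, hjMatrix_cons, hjMatrix_nil, Matrix.mul_one, tMatrix]
    congrm !![?_, ?_; ?_, ?_] <;> norm_num
  · rw [baseTString, if_neg (by omega), Nat.add_sub_cancel, hjMatrix_cons, hjMatrix_append,
      hjMatrix_replicate_two, hjMatrix_cons, hjMatrix_nil, Matrix.mul_one, mul_fin_two, mul_fin_two,
      tMatrix]
    push_cast
    congrm !![?_, ?_; ?_, ?_] <;> ring

lemma isTString_iff {d : ℕ} (hd : 1 ≤ d) {l : List ℤ} :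
    IsTString d l ↔ IsString l ∧
      ∃ n a : ℤ, 2 ≤ n ∧ 1 ≤ a ∧ a < n ∧ IsCoprime a n ∧
        hjMatrix l = tMatrix d n a := by
  constructor
  · rintro ⟨hl, n, a, hn, ha, han, hcop, hval⟩
    exact ⟨hl, n, a, hn, ha, han, hcop,
      hjMatrix_eq_tMatrix (by exact_mod_cast hd) ha han hl hval⟩
  · rintro ⟨hl, n, a, hn, ha, han, hcop, hM⟩
    exact ⟨hl, n, a, hn, ha, han, hcop, by rw [hjValue_eq_div hl.2, hM]; rfl⟩

lemma IsString.cons_add_one_append_two {b : ℤ} {bs : List ℤ} (h : IsString (b :: bs)) :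
    IsString ((b + 1) :: (bs ++ [2])) := by
  refine ⟨List.cons_ne_nil _ _, fun c hc => ?_⟩
  have hb := h.2 b List.mem_cons_self
  simp only [List.mem_cons, List.mem_append, List.not_mem_nil, or_false] at hc
  rcases hc with rfl | hc | rfl
  · omega
  · exact h.2 c (List.mem_cons_of_mem b hc)
  · exact le_rfl

lemma IsString.two_cons_append_add_one {bs : List ℤ} {b : ℤ} (h : IsString (bs ++ [b])) :
    IsString (2 :: (bs ++ [b + 1])) := by
  refine ⟨List.cons_ne_nil _ _, fun c hc => ?_⟩
  have hb := h.2 b (by simp)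
  simp only [List.mem_cons, List.mem_append, List.not_mem_nil, or_false] at hc
  rcases hc with rfl | hc | rfl
  · exact le_rfl
  · exact h.2 c (List.mem_append_left _ hc)
  · omega

lemma isString_baseTString (d : ℕ) : IsString (baseTString d) := by
  unfold baseTString
  split_ifs
  · exact ⟨List.cons_ne_nil _ _, by simp⟩
  · refine ⟨List.cons_ne_nil _ _, fun c hc => ?_⟩
    simp only [List.mem_cons, List.mem_append, List.mem_replicate, List.not_mem_nil,
      or_false] at hc
    omega

lemma isTString_baseTString {d : ℕ} (hd : 1 ≤ d) : IsTString d (baseTString d) :=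
  (isTString_iff hd).2 ⟨isString_baseTString d, 2, 1, le_rfl, le_rfl, one_lt_two,
    isCoprime_one_left, hjMatrix_baseTString hd⟩

lemma IsTString.cons_add_one_append_two {d : ℕ} (hd : 1 ≤ d) {b : ℤ} {bs : List ℤ}
    (h : IsTString d (b :: bs)) : IsTString d ((b + 1) :: (bs ++ [2])) := by
  obtain ⟨hl, n, a, hn, ha, han, ⟨u, v, huv⟩, hM⟩ := (isTString_iff hd).1 h
  refine (isTString_iff hd).2 ⟨hl.cons_add_one_append_two, n + a, a, by omega, ha, by omega,
    ⟨u - v, v, by linear_combination huv⟩, ?_⟩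
  rw [hjMatrix_cons_add_one_append_two, hM, tMatrix_add]

lemma IsTString.two_cons_append_add_one {d : ℕ} (hd : 1 ≤ d) {bs : List ℤ} {b : ℤ}
    (h : IsTString d (bs ++ [b])) : IsTString d (2 :: (bs ++ [b + 1])) := by
  obtain ⟨hl, n, a, hn, ha, han, ⟨u, v, huv⟩, hM⟩ := (isTString_iff hd).1 h
  refine (isTString_iff hd).2 ⟨hl.two_cons_append_add_one, 2 * n - a, n, by omega, by omega,
    by omega, ⟨v + 2 * u, -u, by linear_combination huv⟩, ?_⟩
  rw [hjMatrix_two_cons_append_add_one, hM, tMatrix_two_mul_sub]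

section Closure

variable {d : ℕ} {S : Set (List ℤ)} (hd : 1 ≤ d) (hS : ∀ l ∈ S, IsString l)
  (hbase : baseTString d ∈ S)
  (hop₁ : ∀ (b : ℤ) (bs : List ℤ), b :: bs ∈ S → (b + 1) :: (bs ++ [2]) ∈ S)
  (hop₂ : ∀ (bs : List ℤ) (b : ℤ), bs ++ [b] ∈ S → 2 :: (bs ++ [b + 1]) ∈ S)
include hd hS hbase hop₁ hop₂

theorem exists_mem_hjMatrix_eq_tMatrix (n a : ℤ) (ha : 1 ≤ a) (han : a < n)
    (hcop : IsCoprime a n) : ∃ l ∈ S, hjMatrix l = tMatrix d n a := by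
  obtain ⟨u, v, huv⟩ := hcop
  rcases lt_trichotomy (2 * a) n with hlt | heq | hgt
  · obtain ⟨l, hlS, hl⟩ := exists_mem_hjMatrix_eq_tMatrix (n - a) a ha (by omega)
      ⟨u + v, v, by linear_combination huv⟩
    obtain ⟨b, bs, rfl⟩ := List.exists_cons_of_ne_nil (hS l hlS).1
    refine ⟨_, hop₁ b bs hlS, ?_⟩
    rw [hjMatrix_cons_add_one_append_two, hl, ← tMatrix_add, sub_add_cancel]
  · obtain rfl : a = 1 := Int.eq_one_of_mul_eq_one_right (b := u + 2 * v) (by omega)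
      (by linear_combination huv + v * heq)
    obtain rfl : n = 2 := by omega
    exact ⟨baseTString d, hbase, hjMatrix_baseTString hd⟩
  · obtain ⟨l, hlS, hl⟩ := exists_mem_hjMatrix_eq_tMatrix a (2 * a - n) (by omega) (by omega)
      ⟨-v, u + 2 * v, by linear_combination huv⟩
    have hne := (hS l hlS).1
    rw [← List.dropLast_append_getLast hne] at hlS hl
    refine ⟨_, hop₂ _ _ hlS, ?_⟩
    rw [hjMatrix_two_cons_append_add_one, hl, ← tMatrix_two_mul_sub, sub_sub_cancel]
termination_by n.toNat
decreasing_by all_goals omega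

end Closure

/-- For fixed `d ≥ 1`, the set of `T_d`-strings is exactly the smallest set of
strings containing the base string (`[4]` if `d = 1`, `[3,2,…,2,3]` with
`d − 2` twos if `d ≥ 2`) and closed under the two operations
`[b₁,…,b_r] ↦ [b₁+1, b₂,…,b_r, 2]` and `[b₁,…,b_r] ↦ [2, b₁,…,b_r + 1]`. -/
theorem stmt_16 (d : ℕ) (hd : 1 ≤ d) :
    {l : List ℤ | IsTString d l} =
      ⋂₀ {S : Set (List ℤ) |
        (∀ l ∈ S, IsString l) ∧
        baseTString d ∈ S ∧
        (∀ (b : ℤ) (bs : List ℤ), b :: bs ∈ S → (b + 1) :: (bs ++ [2]) ∈ S) ∧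
        (∀ (bs : List ℤ) (b : ℤ), bs ++ [b] ∈ S → 2 :: (bs ++ [b + 1]) ∈ S)} := by
  ext l
  rw [Set.mem_sInter]
  constructor
  · rintro hl S ⟨hS, hbase, hop₁, hop₂⟩
    obtain ⟨hls, n, a, -, ha, han, hcop, hM⟩ := (isTString_iff hd).1 hl
    obtain ⟨l', hl'S, hM'⟩ :=
      exists_mem_hjMatrix_eq_tMatrix hd hS hbase hop₁ hop₂ n a ha han hcop
    have hls' := hS l' hl'S
    have hll' : l = l' := hjValue_injOn hls.2 hls'.2 <| by
      rw [hjValue_eq_div hls.2, hjValue_eq_div hls'.2, hM, hM']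
    exact hll' ▸ hl'S
  · intro h
    exact h {l | IsTString d l} ⟨fun _ hl => hl.1, isTString_baseTString hd,
      fun _ _ => IsTString.cons_add_one_append_two hd,
      fun _ _ => IsTString.two_cons_append_add_one hd⟩
end

section
/- Fix an integer t ≥ 0. The set of strings of the form [a_r,…,a₁, t+2, b₁,…,b_s], where [a₁,…,a_r] and [b₁,…,b_s] are conjugate strings, is exactly the smallest set of strings containing [2, t+2, 2] and closed under the two operations [e₁,…,e_v] ↦ [e₁+1, e₂,…,e_v, 2] and [e₁,…,e_v] ↦ [2, e₁,…,e_v + 1] (where in the last operation the final entry is increased by 1 and a 2 is prepended). -/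
/-! Write `hjValue l = N / D` with `(N, D) = convergent l` in lowest terms, and let `(N', D')` be
the convergent of `l.dropLast`, so that `N' D - N D' = 1`. For conjugate strings `la`, `lb` (equal
`N`, and `Dₐ + D_b = N`) the two determinant identities make `N` divide `N'ₐ + N'_b`, and size
forces `N'ₐ + N'_b = N`. This linear relation between the convergents shows that raising the last
entry of one string by one while appending a `2` to the other preserves conjugacy, and that every
conjugate pair other than `([2], [2])` ends in `2` on exactly one side, hence comes from a shorter
conjugate pair by such a move. Reading `la` backwards turns these moves into the two operations on
`la.reverse ++ (t + 2) :: lb`. -/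

def hjStep (b : ℤ) (v : ℤ × ℤ) : ℤ × ℤ := (b * v.1 - v.2, v.1)

def convergent (l : List ℤ) : ℤ × ℤ := l.foldr hjStep (1, 0)

/-- For `l ≠ []` this is `convergent l.dropLast`; the seed `(0, -1)` makes
`convergent (l ++ [x]) = x • convergent l - prevConvergent l` hold also for `l = []`. -/
def prevConvergent (l : List ℤ) : ℤ × ℤ := l.foldr hjStep (0, -1)

@[simp] lemma convergent_nil : convergent [] = (1, 0) := rfl

@[simp] lemma convergent_cons (b : ℤ) (l : List ℤ) :
    convergent (b :: l) = (b * (convergent l).1 - (convergent l).2, (convergent l).1) := rfl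

@[simp] lemma prevConvergent_nil : prevConvergent [] = (0, -1) := rfl

@[simp] lemma prevConvergent_cons (b : ℤ) (l : List ℤ) :
    prevConvergent (b :: l) =
      (b * (prevConvergent l).1 - (prevConvergent l).2, (prevConvergent l).1) := rfl

lemma prevConvergent_append_singleton (l : List ℤ) (x : ℤ) :
    prevConvergent (l ++ [x]) = convergent l := by
  simp [prevConvergent, convergent, hjStep]

lemma convergent_append_singleton (l : List ℤ) (x : ℤ) :
    convergent (l ++ [x]) = (x * (convergent l).1 - (prevConvergent l).1,
      x * (convergent l).2 - (prevConvergent l).2) := by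
  induction l with
  | nil => simp
  | cons b l ih =>
    simp only [List.cons_append, convergent_cons, prevConvergent_cons, ih]
    ext <;> ring

lemma prevConvergent_mul_sub_convergent_mul (l : List ℤ) :
    (prevConvergent l).1 * (convergent l).2 - (convergent l).1 * (prevConvergent l).2 = 1 := by
  induction l with
  | nil => simp
  | cons b l ih => simp only [convergent_cons, prevConvergent_cons]; linear_combination ih

lemma isCoprime_convergent (l : List ℤ) : IsCoprime (convergent l).2 (convergent l).1 :=
  ⟨(prevConvergent l).1, -(prevConvergent l).2, by
    linear_combination prevConvergent_mul_sub_convergent_mul l⟩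

section Bounds

variable {l : List ℤ}

lemma convergent_snd_nonneg_lt (hl : ∀ b ∈ l, 2 ≤ b) :
    0 ≤ (convergent l).2 ∧ (convergent l).2 < (convergent l).1 := by
  induction l with
  | nil => simp
  | cons b l ih =>
    obtain ⟨h0, hlt⟩ := ih fun x hx => hl x (List.mem_cons_of_mem b hx)
    have hb := hl b List.mem_cons_self
    simp only [convergent_cons]
    constructor <;> nlinarith

lemma prevConvergent_fst_nonneg_lt (hl : ∀ b ∈ l, 2 ≤ b) :
    0 ≤ (prevConvergent l).1 ∧ (prevConvergent l).1 < (convergent l).1 := by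
  induction l using List.reverseRecOn with
  | nil => simp
  | append_singleton l x ih =>
    obtain ⟨h0, hlt⟩ := ih fun b hb => hl b (List.mem_append_left _ hb)
    have hx := hl x (by simp)
    have := convergent_snd_nonneg_lt fun b hb => hl b (List.mem_append_left _ hb)
    rw [prevConvergent_append_singleton, convergent_append_singleton]
    constructor <;> nlinarith

lemma prevConvergent_fst_pos (hl : ∀ b ∈ l, 2 ≤ b) (hne : l ≠ []) :
    0 < (prevConvergent l).1 := by
  obtain ⟨r, x, rfl⟩ := (List.eq_nil_or_concat' l).resolve_left hne
  have := convergent_snd_nonneg_lt fun b hb => hl b (List.mem_append_left _ hb)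
  rw [prevConvergent_append_singleton]
  omega

lemma hjValue_eq_convergent (hl : ∀ b ∈ l, 2 ≤ b) :
    hjValue l = (convergent l).1 / (convergent l).2 := by
  induction l with
  | nil => simp [hjValue]
  | cons b l ih =>
    have hl' : ∀ x ∈ l, 2 ≤ x := fun x hx => hl x (List.mem_cons_of_mem b hx)
    have hpos : ((convergent l).1 : ℚ) ≠ 0 := by
      have := convergent_snd_nonneg_lt hl'
      exact_mod_cast (by omega : (convergent l).1 ≠ 0)
    rw [hjValue, ih hl', convergent_cons]
    push_cast
    field_simp

lemma convergent_snd_pos (hl : ∀ b ∈ l, 2 ≤ b) (hne : l ≠ []) :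
    0 < (convergent l).2 := by
  obtain _ | ⟨b, l⟩ := l
  · exact absurd rfl hne
  · have := convergent_snd_nonneg_lt fun x hx => hl x (List.mem_cons_of_mem b hx)
    simp only [convergent_cons]
    omega

lemma convergent_eq_of_hjValue_eq (hl : ∀ b ∈ l, 2 ≤ b) (hne : l ≠ [])
    {n a : ℤ} (ha : 0 < a) (hcop : IsCoprime a n) (hv : hjValue l = n / a) :
    convergent l = (n, a) := by
  rw [hjValue_eq_convergent hl] at hv
  obtain ⟨hn, hd⟩ := Rat.div_int_inj (convergent_snd_pos hl hne) ha
    (Int.isCoprime_iff_gcd_eq_one.1 (isCoprime_convergent l).symm)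
    (Int.isCoprime_iff_gcd_eq_one.1 hcop.symm) hv
  exact Prod.ext hn hd

end Bounds

def ConvergentConj (la lb : List ℤ) : Prop :=
  (convergent la).1 = (convergent lb).1 ∧
    (convergent la).2 + (convergent lb).2 = (convergent la).1

lemma conjugate_iff_convergentConj {la lb : List ℤ} (ha : IsString la) (hb : IsString lb) :
    Conjugate la lb ↔ ConvergentConj la lb := by
  constructor
  · rintro ⟨n, a, ha0, han, hcop, hva, hvb⟩
    have hcop' : IsCoprime (n - a) n := by
      simpa [sub_eq_neg_add] using hcop.neg_left.add_mul_left_left 1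
    rw [ConvergentConj, convergent_eq_of_hjValue_eq ha.2 ha.1 ha0 hcop hva,
      convergent_eq_of_hjValue_eq hb.2 hb.1 (sub_pos.2 han) hcop'
        (by rw [hvb]; push_cast; rfl)]
    exact ⟨rfl, by ring⟩
  · rintro ⟨hn, hd⟩
    have := convergent_snd_nonneg_lt ha.2
    have := convergent_snd_nonneg_lt hb.2
    have hdb : (convergent lb).2 = (convergent la).1 - (convergent la).2 := by omega
    refine ⟨(convergent la).1, (convergent la).2, by omega, by omega, isCoprime_convergent la,
      hjValue_eq_convergent ha.2, ?_⟩
    rw [hjValue_eq_convergent hb.2, ← hn, hdb]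
    push_cast
    rfl

namespace ConvergentConj

variable {la lb : List ℤ}

lemma symm (h : ConvergentConj la lb) : ConvergentConj lb la :=
  ⟨h.1.symm, by linarith [h.1, h.2]⟩

lemma ne_nil_left (hb : ∀ b ∈ lb, 2 ≤ b) (h : ConvergentConj la lb) : la ≠ [] := by
  rintro rfl
  have := convergent_snd_nonneg_lt hb
  simp only [ConvergentConj, convergent_nil] at h
  omega

/-- The determinant identities make `N` divide `N'ₐ + N'_b`, and the bounds
`0 < N'ₐ + N'_b < 2N` force equality. -/
lemma prevConvergent_fst_add (ha : ∀ b ∈ la, 2 ≤ b) (hb : ∀ b ∈ lb, 2 ≤ b)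
    (h : ConvergentConj la lb) :
    (prevConvergent la).1 + (prevConvergent lb).1 = (convergent la).1 ∧
      (prevConvergent la).2 + (prevConvergent lb).1 - (prevConvergent lb).2 =
        (convergent la).2 := by
  obtain ⟨hn, hd⟩ := h
  have deta := prevConvergent_mul_sub_convergent_mul la
  have detb := prevConvergent_mul_sub_convergent_mul lb
  have hdvd : (convergent la).1 ∣
      ((prevConvergent la).1 + (prevConvergent lb).1) * (convergent la).2 :=
    ⟨(prevConvergent la).2 + (prevConvergent lb).1 - (prevConvergent lb).2, by
      linear_combination deta - detb + (prevConvergent lb).1 * hd + (prevConvergent lb).2 * hn⟩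
  have hsum : (prevConvergent la).1 + (prevConvergent lb).1 = (convergent la).1 := by
    have hne := ne_nil_left hb ⟨hn, hd⟩
    have := prevConvergent_fst_pos ha hne
    have := prevConvergent_fst_nonneg_lt ha
    have := prevConvergent_fst_nonneg_lt hb
    have := Int.eq_zero_of_abs_lt_dvd
      (dvd_sub ((isCoprime_convergent la).symm.dvd_of_dvd_mul_right hdvd) dvd_rfl)
      (abs_lt.2 ⟨by omega, by omega⟩)
    omega
  have := convergent_snd_nonneg_lt ha
  refine ⟨hsum, mul_left_cancel₀ (by omega : (convergent la).1 ≠ 0) ?_⟩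
  linear_combination detb - deta - (prevConvergent lb).1 * hd - (prevConvergent lb).2 * hn
    + (convergent la).2 * hsum

lemma extend {ra : List ℤ} {x : ℤ} (ha : ∀ b ∈ ra ++ [x], 2 ≤ b)
    (hb : ∀ b ∈ lb, 2 ≤ b) (h : ConvergentConj (ra ++ [x]) lb) :
    ConvergentConj (ra ++ [x + 1]) (lb ++ [2]) := by
  obtain ⟨hsum₁, hsum₂⟩ := prevConvergent_fst_add ha hb h
  obtain ⟨hn, hd⟩ := h
  simp only [ConvergentConj, convergent_append_singleton, prevConvergent_append_singleton] at *
  exact ⟨by linear_combination 2 * hn + hsum₁,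
    by linear_combination 2 * hd + hsum₂ - hsum₁⟩

lemma peel {ra rb : List ℤ} {y : ℤ} (ha : ∀ b ∈ ra ++ [2], 2 ≤ b)
    (hb : ∀ b ∈ rb ++ [y], 2 ≤ b)
    (h : ConvergentConj (ra ++ [2]) (rb ++ [y])) : ConvergentConj ra (rb ++ [y - 1]) := by
  obtain ⟨hsum₁, hsum₂⟩ := prevConvergent_fst_add ha hb h
  obtain ⟨hn, hd⟩ := h
  simp only [ConvergentConj, convergent_append_singleton, prevConvergent_append_singleton] at *
  exact ⟨by linear_combination hn + hsum₁, by linear_combination hd + hsum₂ - hsum₁⟩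

lemma last_cases {ra rb : List ℤ} {x y : ℤ} (ha : ∀ b ∈ ra ++ [x], 2 ≤ b)
    (hb : ∀ b ∈ rb ++ [y], 2 ≤ b) (h : ConvergentConj (ra ++ [x]) (rb ++ [y])) :
    (ra = [] ∧ rb = [] ∧ x = 2 ∧ y = 2) ∨ (x = 2 ∧ 3 ≤ y) ∨ (3 ≤ x ∧ y = 2) := by
  have hsum := (prevConvergent_fst_add ha hb h).1
  have hn := h.1
  simp only [convergent_append_singleton, prevConvergent_append_singleton] at hsum hn
  have hra := (List.forall_mem_append.1 ha).1
  have hrb := (List.forall_mem_append.1 hb).1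
  have := prevConvergent_fst_nonneg_lt hra
  have := prevConvergent_fst_nonneg_lt hrb
  have hx₂ := ha x (by simp)
  have hy₂ := hb y (by simp)
  rcases (by omega : x = 2 ∨ 3 ≤ x) with rfl | hx <;>
    rcases (by omega : y = 2 ∨ 3 ≤ y) with rfl | hy
  · have hra0 : ra = [] := by
      by_contra hne
      have := prevConvergent_fst_pos hra hne
      omega
    have hrb0 : rb = [] := by
      by_contra hne
      have := prevConvergent_fst_pos hrb hne
      omega
    exact Or.inl ⟨hra0, hrb0, rfl, rfl⟩
  · exact Or.inr (Or.inl ⟨rfl, hy⟩)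
  · exact Or.inr (Or.inr ⟨hx, rfl⟩)
  · nlinarith

end ConvergentConj

lemma reverse_append_cons_mem {S : Set (List ℤ)} {c : ℤ} (hbase : [2, c, 2] ∈ S)
    (hop₁ : ∀ (e : ℤ) (es : List ℤ), e :: es ∈ S → (e + 1) :: (es ++ [2]) ∈ S)
    (hop₂ : ∀ (es : List ℤ) (e : ℤ), es ++ [e] ∈ S → 2 :: (es ++ [e + 1]) ∈ S)
    {la lb : List ℤ} (ha : ∀ b ∈ la, 2 ≤ b) (hb : ∀ b ∈ lb, 2 ≤ b)
    (h : ConvergentConj la lb) : la.reverse ++ c :: lb ∈ S := by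
  induction hlen : la.length + lb.length using Nat.strong_induction_on generalizing la lb with
  | _ k ih =>
  obtain ⟨ra, x, rfl⟩ := (List.eq_nil_or_concat' la).resolve_left (h.ne_nil_left hb)
  obtain ⟨rb, y, rfl⟩ := (List.eq_nil_or_concat' lb).resolve_left (h.symm.ne_nil_left ha)
  have hra := (List.forall_mem_append.1 ha).1
  have hrb := (List.forall_mem_append.1 hb).1
  rcases h.last_cases ha hb with ⟨rfl, rfl, rfl, rfl⟩ | ⟨rfl, hy⟩ | ⟨hx, rfl⟩
  · simpa using hbase
  · have hrb' : ∀ b ∈ rb ++ [y - 1], 2 ≤ b :=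
      List.forall_mem_append.2 ⟨hrb, by simp; omega⟩
    have := ih _ (by rw [← hlen]; simp only [List.length_append, List.length_singleton]; omega)
      hra hrb' (h.peel ha hb) rfl
    simpa using hop₂ (ra.reverse ++ c :: rb) (y - 1) (by simpa using this)
  · have hra' : ∀ b ∈ ra ++ [x - 1], 2 ≤ b :=
      List.forall_mem_append.2 ⟨hra, by simp; omega⟩
    have := ih _ (by rw [← hlen]; simp only [List.length_append, List.length_singleton]; omega)
      hra' hrb (h.symm.peel hb ha).symm rfl
    simpa using hop₁ (x - 1) (ra.reverse ++ c :: rb) (by simpa using this)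

def conjGlue (c : ℤ) : Set (List ℤ) :=
  {l | ∃ la lb, (∀ b ∈ la, 2 ≤ b) ∧ (∀ b ∈ lb, 2 ≤ b) ∧ ConvergentConj la lb ∧
    l = la.reverse ++ c :: lb}

namespace conjGlue

variable {c : ℤ}

lemma isString (hc : 2 ≤ c) {l : List ℤ} (hl : l ∈ conjGlue c) : IsString l := by
  obtain ⟨la, lb, ha, hb, -, rfl⟩ := hl
  refine ⟨by simp, ?_⟩
  simp only [List.mem_append, List.mem_reverse, List.mem_cons]
  rintro b (h | rfl | h)
  exacts [ha b h, hc, hb b h]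

lemma base_mem : [2, c, 2] ∈ conjGlue c :=
  ⟨[2], [2], by simp, by simp, by simp [ConvergentConj], rfl⟩

lemma cons_mem {e : ℤ} {es : List ℤ} (h : e :: es ∈ conjGlue c) :
    (e + 1) :: (es ++ [2]) ∈ conjGlue c := by
  obtain ⟨la, lb, ha, hb, h, heq⟩ := h
  obtain ⟨ra, x, rfl⟩ := (List.eq_nil_or_concat' la).resolve_left (h.ne_nil_left hb)
  obtain ⟨rfl, rfl⟩ : e = x ∧ es = ra.reverse ++ c :: lb := by simpa using heq
  refine ⟨ra ++ [e + 1], lb ++ [2], ?_, ?_, h.extend ha hb, by simp⟩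
  · have := ha e (by simp)
    exact List.forall_mem_append.2 ⟨(List.forall_mem_append.1 ha).1, by simp; omega⟩
  · exact List.forall_mem_append.2 ⟨hb, by simp⟩

lemma append_singleton_mem {e : ℤ} {es : List ℤ} (h : es ++ [e] ∈ conjGlue c) :
    2 :: (es ++ [e + 1]) ∈ conjGlue c := by
  obtain ⟨la, lb, ha, hb, h, heq⟩ := h
  obtain ⟨rb, y, rfl⟩ := (List.eq_nil_or_concat' lb).resolve_left (h.symm.ne_nil_left ha)
  obtain ⟨rfl, rfl⟩ : es = la.reverse ++ c :: rb ∧ e = y := by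
    rw [← List.cons_append, ← List.append_assoc] at heq
    exact List.append_singleton_inj.1 heq
  refine ⟨la ++ [2], rb ++ [e + 1], ?_, ?_, (h.symm.extend hb ha).symm, by simp⟩
  · exact List.forall_mem_append.2 ⟨ha, by simp⟩
  · have := hb e (by simp)
    exact List.forall_mem_append.2 ⟨(List.forall_mem_append.1 hb).1, by simp; omega⟩

end conjGlue

lemma setOf_conjugate_eq_conjGlue (c : ℤ) :
    {l : List ℤ | ∃ la lb : List ℤ, IsString la ∧ IsString lb ∧
      Conjugate la lb ∧ l = la.reverse ++ c :: lb} = conjGlue c := by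
  ext l
  constructor
  · rintro ⟨la, lb, ha, hb, h, rfl⟩
    exact ⟨la, lb, ha.2, hb.2, (conjugate_iff_convergentConj ha hb).1 h, rfl⟩
  · rintro ⟨la, lb, ha, hb, h, rfl⟩
    have hsa : IsString la := ⟨h.ne_nil_left hb, ha⟩
    have hsb : IsString lb := ⟨h.symm.ne_nil_left ha, hb⟩
    exact ⟨la, lb, hsa, hsb, (conjugate_iff_convergentConj hsa hsb).2 h, rfl⟩

/-- For fixed `t ≥ 0`, the set of strings of the form
`[a_r,…,a₁, t+2, b₁,…,b_s]` with `[a₁,…,a_r]`, `[b₁,…,b_s]` conjugate strings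
is exactly the smallest set of strings containing `[2, t+2, 2]` and closed
under the two operations `[e₁,…,e_v] ↦ [e₁+1, e₂,…,e_v, 2]` and
`[e₁,…,e_v] ↦ [2, e₁,…,e_v + 1]`. -/
theorem stmt_18 (t : ℕ) :
    {l : List ℤ | ∃ la lb : List ℤ, IsString la ∧ IsString lb ∧
        Conjugate la lb ∧ l = la.reverse ++ ((t : ℤ) + 2) :: lb} =
      ⋂₀ {S : Set (List ℤ) |
        (∀ l ∈ S, IsString l) ∧
        [2, (t : ℤ) + 2, 2] ∈ S ∧
        (∀ (e : ℤ) (es : List ℤ), e :: es ∈ S → (e + 1) :: (es ++ [2]) ∈ S) ∧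
        (∀ (es : List ℤ) (e : ℤ), es ++ [e] ∈ S → 2 :: (es ++ [e + 1]) ∈ S)} := by
  rw [setOf_conjugate_eq_conjGlue]
  refine subset_antisymm (Set.subset_sInter ?_) (Set.sInter_subset_of_mem ⟨?_, ?_, ?_, ?_⟩)
  · rintro S ⟨-, hbase, hop₁, hop₂⟩ l ⟨la, lb, ha, hb, h, rfl⟩
    exact reverse_append_cons_mem hbase hop₁ hop₂ ha hb h
  · exact fun l => conjGlue.isString (by omega)
  · exact conjGlue.base_mem
  · exact fun e es => conjGlue.cons_mem
  · exact fun es e => conjGlue.append_singleton_mem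
end
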